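/- The automaton group of automaton 882 is non-contracting: g = acacbc satisfies g(11) = 11, g|_{11} = g, and g has infinite order. -/

import Mathlib

/-!
The automaton is its own inverse, so `a`, `b`, `c` are involutions, and reading off sections gives
`g(11w) = 11 g(w)`. Hence every power of `g` is its own section at `11…1`, so a finite nucleus would
contain infinitely many distinct powers of `g` unless `g` has finite order.

`g` has infinite order because the orbit of `000…` is infinite: `g` maps `00w ↦ 01 (ac)(w)` and
`01w ↦ 00 (bcac)(w)`, so odd powers of `g` move `000…`, while `g^(2m)(000…) = 00 r^m(000…)` with
`r = bcacac`. Since `r` has the same sections at `00` and `01`, the same holds for `r`, and halving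
the exponent shows that no positive power of `r`, hence of `g`, fixes `000…`.
-/

namespace Stmt10


/-- A Mealy automaton over the binary alphabet with state set `S`. -/
structure Mealy (S : Type) where
  /-- transition function -/
  δ : S → Bool → S
  /-- output function -/
  τ : S → Bool → Bool

namespace Mealy

variable {S : Type} (M : Mealy S)

/-- The state reached from `q` after reading the first `n` letters of `w`. -/
def stateAt (q : S) (w : ℕ → Bool) : ℕ → S
  | 0 => q
  | n + 1 => M.δ (stateAt q w n) (w n)

/-- The action of state `q` on infinite words. -/
def act (q : S) (w : ℕ → Bool) : ℕ → Bool :=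
  fun n => M.τ (M.stateAt q w n) (w n)

/-- The inverse automaton (for automata whose output functions are involutions). -/
def inv : Mealy S := ⟨fun q b => M.δ q (M.τ q b), M.τ⟩

theorem stateAt_inv_act (h : ∀ q b, M.τ q (M.τ q b) = b) (q : S) (w : ℕ → Bool) :
    ∀ n, M.inv.stateAt q (M.act q w) n = M.stateAt q w n := by
  intro n
  induction n with
  | zero => rfl
  | succ n ih =>
    show M.inv.δ (M.inv.stateAt q (M.act q w) n) (M.act q w n) = M.δ (M.stateAt q w n) (w n)
    rw [ih]
    show M.δ (M.stateAt q w n) (M.τ (M.stateAt q w n) (M.τ (M.stateAt q w n) (w n))) = _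
    rw [h]

theorem inv_act (h : ∀ q b, M.τ q (M.τ q b) = b) (q : S) (w : ℕ → Bool) :
    M.inv.act q (M.act q w) = w := by
  funext n
  show M.inv.τ (M.inv.stateAt q (M.act q w) n) (M.act q w n) = w n
  rw [stateAt_inv_act M h]
  show M.τ (M.stateAt q w n) (M.τ (M.stateAt q w n) (w n)) = w n
  rw [h]

theorem inv_inv (h : ∀ q b, M.τ q (M.τ q b) = b) : M.inv.inv = M := by
  obtain ⟨d, t⟩ := M
  simp only [inv]
  congr 1
  funext q b
  exact congrArg (d q) (h q b)

/-- The permutation of the set of infinite binary words defined by state `q`. -/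
def perm (h : ∀ q b, M.τ q (M.τ q b) = b) (q : S) : Equiv.Perm (ℕ → Bool) where
  toFun := M.act q
  invFun := M.inv.act q
  left_inv := fun w => M.inv_act h q w
  right_inv := fun w => by
    have h2 : ∀ q b, M.inv.τ q (M.inv.τ q b) = b := h
    have := M.inv.inv_act h2 q w
    rwa [M.inv_inv h] at this

end Mealy

/-- Prepend a finite word to an infinite word. -/
def cat (u : List Bool) (w : ℕ → Bool) : ℕ → Bool :=
  fun n => u.getD n (w (n - u.length))

/-- The (semantic) restriction of a transformation of infinite words to the
subtree indexed by the finite word `u`. -/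
def resW (f : (ℕ → Bool) → ℕ → Bool) (u : List Bool) : (ℕ → Bool) → ℕ → Bool :=
  fun w n => f (cat u w) (n + u.length)

/-- The periodic infinite word with period `u`. -/
def per (u : List Bool) : ℕ → Bool := fun n => u.getD (n % u.length) false

/-- Left-shift equivalence of infinite words: they share a common infinite tail. -/
def seq (u v : ℕ → Bool) : Prop := ∃ k l : ℕ, ∀ n, u (n + k) = v (n + l)

inductive St : Type
  | a | b | c
deriving DecidableEq

instance : Fintype St := ⟨{St.a, St.b, St.c}, fun x => by cases x <;> simp⟩

/-- Automaton 882. -/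
def M : Mealy St where
  δ := fun q x => match q, x with
    | .a, false => .c | .a, true => .c
    | .b, false => .b | .b, true => .c
    | .c, false => .b | .c, true => .a
  τ := fun q x => match q with
    | .a => !x
    | .b => x
    | .c => x

theorem M_inv : ∀ q x, M.τ q (M.τ q x) = x := by decide

/-- The automorphism of the binary tree boundary defined by state `a`. -/
def a : Equiv.Perm (ℕ → Bool) := M.perm M_inv .a

/-- The automorphism of the binary tree boundary defined by state `b`. -/
def b : Equiv.Perm (ℕ → Bool) := M.perm M_inv .b

/-- The automorphism of the binary tree boundary defined by state `c`. -/
def c : Equiv.Perm (ℕ → Bool) := M.perm M_inv .c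

open Function

theorem cat_nil (w : ℕ → Bool) : cat [] w = w := rfl

theorem cat_append (u v : List Bool) (w : ℕ → Bool) :
    cat (u ++ v) w = cat u (cat v w) := by
  funext n
  simp only [cat, List.getD_eq_getElem?_getD, List.length_append, List.getElem?_append]
  by_cases hn : n < u.length
  · simp [hn]
  · simp [hn, Nat.sub_sub]

theorem cat_apply_add_length (u : List Bool) (w : ℕ → Bool) (n : ℕ) :
    cat u w (n + u.length) = w n := by
  simp [cat]

theorem cat_cons_zero (x : Bool) (u : List Bool) (w : ℕ → Bool) : cat (x :: u) w 0 = x := rfl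

theorem cat_cons_succ (x : Bool) (u : List Bool) (w : ℕ → Bool) (n : ℕ) :
    cat (x :: u) w (n + 1) = cat u w n := by
  simp [cat]

theorem cat_pair (x y : Bool) (w : ℕ → Bool) : cat [x, y] w = cat [x] (cat [y] w) :=
  cat_append [x] [y] w

theorem cat_injective (u : List Bool) : Injective (cat u) := fun w w' h =>
  funext fun n => by simpa only [cat_apply_add_length] using congrFun h (n + u.length)

theorem resW_nil (f : (ℕ → Bool) → ℕ → Bool) : resW f [] = f := rfl

theorem resW_append (f : (ℕ → Bool) → ℕ → Bool) (u v : List Bool) :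
    resW f (u ++ v) = resW (resW f u) v := by
  funext w n
  simp only [resW, cat_append, List.length_append, Nat.add_assoc, Nat.add_comm v.length]

theorem resW_eq_self_of_commute {f : (ℕ → Bool) → ℕ → Bool} {u : List Bool}
    (hf : Function.Commute f (cat u)) : resW f u = f := by
  funext w n
  change f (cat u w) (n + u.length) = f w n
  rw [hf.eq, cat_apply_add_length]

theorem exists_long_resW_eq_self {f : (ℕ → Bool) → ℕ → Bool} {u : List Bool} (hu : u ≠ [])
    (hf : Function.Commute f (cat u)) (k : ℕ) :
    ∃ v : List Bool, k ≤ v.length ∧ resW f v = f := by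
  induction k with
  | zero => exact ⟨[], le_rfl, resW_nil f⟩
  | succ k ih =>
    obtain ⟨v, hv, hres⟩ := ih
    refine ⟨u ++ v, ?_, by rw [resW_append, resW_eq_self_of_commute hf, hres]⟩
    have := List.length_pos_iff.mpr hu
    simp only [List.length_append]
    omega

def IsContracting (G : Subgroup (Equiv.Perm (ℕ → Bool))) : Prop :=
  ∃ N : Finset (Equiv.Perm (ℕ → Bool)),
    ∀ h ∈ G, ∃ k : ℕ, ∀ u : List Bool, k ≤ u.length → ∃ m ∈ N, resW ⇑h u = ⇑m

theorem not_isContracting_of_commute_cat {G : Subgroup (Equiv.Perm (ℕ → Bool))}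
    {f : Equiv.Perm (ℕ → Bool)} (hfG : f ∈ G) {u : List Bool} (hu : u ≠ [])
    (hfu : Function.Commute f (cat u)) (hf : ¬IsOfFinOrder f) : ¬IsContracting G := by
  rintro ⟨N, hN⟩
  have hpow : ∀ j : ℕ, f ^ j ∈ (N : Set (Equiv.Perm (ℕ → Bool))) := fun j => by
    obtain ⟨k, hk⟩ := hN (f ^ j) (pow_mem hfG j)
    have hfju : Function.Commute ⇑(f ^ j) (cat u) := by
      rw [Equiv.Perm.coe_pow]
      exact hfu.iterate_left j
    obtain ⟨v, hv, hres⟩ := exists_long_resW_eq_self hu hfju k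
    obtain ⟨m, hm, hvm⟩ := hk v hv
    rwa [DFunLike.coe_injective (hres.symm.trans hvm)]
  exact Set.infinite_range_of_injective (injective_pow_iff_not_isOfFinOrder.mpr hf)
    (N.finite_toSet.subset (Set.range_subset_iff.mpr hpow))

theorem Nat.eq_zero_of_forall_exists_half {P : ℕ → Prop} (hP : ∀ n, P n → ∃ m, n = 2 * m ∧ P m)
    {n : ℕ} (hn : P n) : n = 0 := by
  induction n using Nat.strong_induction_on with
  | _ n ih =>
    obtain ⟨m, rfl, hm⟩ := hP n hn
    rcases Nat.eq_zero_or_pos m with hm0 | hm0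
    · rw [hm0]
    · exact absurd (ih m (by omega) hm) hm0.ne'

section Iterate

variable {X : Type*} {p q f s t : X → X} {z : X}

theorem exists_eq_two_mul_of_iterate_eq (hp : Injective p) (hqp : ∀ w w', q w ≠ p w')
    (hz : p z = z) (hfp : ∀ w, f (p w) = q (s w)) (hfq : ∀ w, f (q w) = p (t w)) {n : ℕ}
    (hn : f^[n] z = z) : ∃ m, n = 2 * m ∧ (t ∘ s)^[m] z = z := by
  have hsq : Semiconj p (t ∘ s) f^[2] := fun w => by simp [hfp, hfq]
  have heven : ∀ m, f^[2 * m] z = p ((t ∘ s)^[m] z) := fun m =>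
    calc f^[2 * m] z = (f^[2])^[m] (p z) := by rw [iterate_mul, hz]
      _ = p ((t ∘ s)^[m] z) := ((hsq.iterate_right m).eq z).symm
  obtain ⟨m, rfl | rfl⟩ := Nat.even_or_odd' n
  · exact ⟨m, rfl, hp (by rw [← heven, hn, hz])⟩
  · rw [iterate_succ_apply', heven, hfp] at hn
    exact absurd (hn.trans hz.symm) (hqp _ _)

end Iterate

namespace Mealy

variable {S : Type} (M : Mealy S)

theorem stateAt_cat_singleton (q : S) (x : Bool) (w : ℕ → Bool) (n : ℕ) :
    M.stateAt q (cat [x] w) (n + 1) = M.stateAt (M.δ q x) w n := by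
  induction n with
  | zero => rfl
  | succ n ih =>
    change M.δ (M.stateAt q (cat [x] w) (n + 1)) (cat [x] w (n + 1)) = M.δ (M.stateAt _ w n) (w n)
    rw [ih, cat_cons_succ, cat_nil]

theorem act_cat_singleton (q : S) (x : Bool) (w : ℕ → Bool) :
    M.act q (cat [x] w) = cat [M.τ q x] (M.act (M.δ q x) w) := by
  funext n
  cases n with
  | zero => rfl
  | succ n => simp only [act, stateAt_cat_singleton, cat_cons_succ, cat_nil]

end Mealy

theorem M_inv_eq_self : M.inv = M := by
  simp only [Mealy.inv, M, Mealy.mk.injEq, and_true]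
  funext q x
  cases q <;> cases x <;> rfl

theorem M_act_involutive (q : St) : Involutive (M.act q) := fun w => by
  simpa only [M_inv_eq_self] using M.inv_act M_inv q w

@[simp] theorem a_apply_a (w : ℕ → Bool) : a (a w) = w := M_act_involutive .a w
@[simp] theorem b_apply_b (w : ℕ → Bool) : b (b w) = w := M_act_involutive .b w
@[simp] theorem c_apply_c (w : ℕ → Bool) : c (c w) = w := M_act_involutive .c w

@[simp] theorem a_cat_singleton (x : Bool) (w : ℕ → Bool) : a (cat [x] w) = cat [!x] (c w) := by
  cases x <;> exact M.act_cat_singleton .a _ w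
@[simp] theorem b_cat_false (w : ℕ → Bool) : b (cat [false] w) = cat [false] (b w) :=
  M.act_cat_singleton .b false w
@[simp] theorem b_cat_true (w : ℕ → Bool) : b (cat [true] w) = cat [true] (c w) :=
  M.act_cat_singleton .b true w
@[simp] theorem c_cat_false (w : ℕ → Bool) : c (cat [false] w) = cat [false] (b w) :=
  M.act_cat_singleton .c false w
@[simp] theorem c_cat_true (w : ℕ → Bool) : c (cat [true] w) = cat [true] (a w) :=
  M.act_cat_singleton .c true w

def g : Equiv.Perm (ℕ → Bool) := a * c * a * c * b * c

def r : Equiv.Perm (ℕ → Bool) := b * c * a * c * a * c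

theorem g_cat_true_true (w : ℕ → Bool) : g (cat [true, true] w) = cat [true, true] (g w) := by
  simp [g, cat_pair]

theorem g_cat_false_false (w : ℕ → Bool) :
    g (cat [false, false] w) = cat [false, true] ((a * c) w) := by
  simp [g, cat_pair]

theorem g_cat_false_true (w : ℕ → Bool) :
    g (cat [false, true] w) = cat [false, false] ((b * c * a * c) w) := by
  simp [g, cat_pair]

theorem r_cat_false_false (w : ℕ → Bool) :
    r (cat [false, false] w) = cat [false, true] ((a * c) w) := by
  simp [r, cat_pair]

theorem r_cat_false_true (w : ℕ → Bool) :
    r (cat [false, true] w) = cat [false, false] ((b * c * a * c) w) := by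
  simp [r, cat_pair]

def zeroWord : ℕ → Bool := fun _ => false

theorem cat_zeroWord : cat [false, false] zeroWord = zeroWord := by
  funext n
  rcases n with _ | _ | n <;> rfl

theorem cat_false_true_ne (w w' : ℕ → Bool) : cat [false, true] w ≠ cat [false, false] w' :=
  fun h => by simpa [cat_cons_succ, cat_cons_zero] using congrFun h 1

theorem exists_eq_two_mul_of_iterate_zeroWord {f : Equiv.Perm (ℕ → Bool)} {n : ℕ}
    (hf00 : ∀ w, f (cat [false, false] w) = cat [false, true] ((a * c) w))
    (hf01 : ∀ w, f (cat [false, true] w) = cat [false, false] ((b * c * a * c) w))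
    (hn : (⇑f)^[n] zeroWord = zeroWord) : ∃ m, n = 2 * m ∧ (⇑r)^[m] zeroWord = zeroWord :=
  exists_eq_two_mul_of_iterate_eq (cat_injective _) cat_false_true_ne cat_zeroWord hf00 hf01 hn

theorem r_iterate_zeroWord {n : ℕ} (hn : (⇑r)^[n] zeroWord = zeroWord) : n = 0 :=
  Nat.eq_zero_of_forall_exists_half
    (fun _ => exists_eq_two_mul_of_iterate_zeroWord r_cat_false_false r_cat_false_true) hn

theorem not_isOfFinOrder_g : ¬IsOfFinOrder g := by
  rw [isOfFinOrder_iff_pow_eq_one]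
  rintro ⟨n, hn, hgn⟩
  have hfix : (⇑g)^[n] zeroWord = zeroWord := by rw [← Equiv.Perm.coe_pow, hgn]; rfl
  obtain ⟨m, rfl, hm⟩ :=
    exists_eq_two_mul_of_iterate_zeroWord g_cat_false_false g_cat_false_true hfix
  have := r_iterate_zeroWord hm
  omega

theorem g_mem_closure : g ∈ Subgroup.closure ({a, b, c} : Set (Equiv.Perm (ℕ → Bool))) := by
  refine mul_mem (mul_mem (mul_mem (mul_mem (mul_mem ?_ ?_) ?_) ?_) ?_) ?_ <;>
    exact Subgroup.subset_closure (by simp)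

/-- The automaton group of automaton 882 is non-contracting: `g = acacbc` satisfies
`g(11) = 11`, `g|₁₁ = g`, and `g` has infinite order. -/
theorem automaton882_noncontracting :
    (∀ w : ℕ → Bool, (a * c * a * c * b * c) (cat [true, true] w) =
      cat [true, true] ((a * c * a * c * b * c) w)) ∧
    (∀ n : ℕ, 1 ≤ n → (a * c * a * c * b * c) ^ n ≠ 1) ∧
    ¬ ∃ N : Finset (Equiv.Perm (ℕ → Bool)),
      ∀ g ∈ Subgroup.closure ({a, b, c} : Set (Equiv.Perm (ℕ → Bool))),
        ∃ k : ℕ, ∀ u : List Bool, k ≤ u.length → ∃ m ∈ N, resW ⇑g u = ⇑m :=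
  ⟨g_cat_true_true,
    fun n hn hgn => not_isOfFinOrder_g (isOfFinOrder_iff_pow_eq_one.mpr ⟨n, hn, hgn⟩),
    not_isContracting_of_commute_cat g_mem_closure (List.cons_ne_nil _ _) g_cat_true_true
      not_isOfFinOrder_g⟩

end Stmt10
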